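/- arXiv:2211.00411 — 2 statements merged into one kernel-verified Lean document; each statement's English description precedes it below -/
import Mathlib

section
/- Let X be a Tychonoff (completely regular T1) space such that X = ⋃_{n∈ℕ} X_n where, for every n ∈ ℕ, the subspace X_n is realcompact and z-embedded in X (that is, for every zero-set Z of the subspace X_n there exists a zero-set Z̃ of X with Z = Z̃ ∩ X_n). Then X is realcompact. -/
open Topology TopologicalSpace Set

universe u

/-- `X` is `E`-compact if it is homeomorphic to a closed subspace of a power `E^J`
for some nonempty index set `J`. -/
def IsECompact (E : Type*) (X : Type u)
    [TopologicalSpace E] [TopologicalSpace X] : Prop :=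
  ∃ (J : Type u) (_ : Nonempty J) (e : X → J → E),
    IsEmbedding e ∧ IsClosed (Set.range e)

/-- A zero-set of `X` is a set of the form `f ⁻¹' {0}` for a continuous
`f : X → ℝ`. -/
def IsZeroSet {X : Type*} [TopologicalSpace X] (Z : Set X) : Prop :=
  ∃ f : X → ℝ, Continuous f ∧ Z = f ⁻¹' {0}

noncomputable section RCAux

open Filter

variable {X : Type u} [TopologicalSpace X]

/-- The evaluation map of `X` into `ℝ ^ C(X,ℝ)`. -/
def rcEv (X : Type u) [TopologicalSpace X] : X → C(X, ℝ) → ℝ := fun x f => f x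

variable {p : C(X, ℝ) → ℝ}

theorem rc_key_eq (hp : p ∈ closure (Set.range (rcEv X)))
    {k : ℕ} (f : Fin k → C(X, ℝ)) {φ ψ : (Fin k → ℝ) → ℝ}
    (hφ : Continuous φ) (hψ : Continuous ψ)
    (h : ∀ x, φ (fun i => f i x) = ψ (fun i => f i x)) :
    φ (fun i => p (f i)) = ψ (fun i => p (f i)) := by
  have hc : Continuous fun q : C(X, ℝ) → ℝ => (fun i => q (f i)) :=
    continuous_pi fun i => continuous_apply (f i)
  have hA : IsClosed {q : C(X, ℝ) → ℝ |
      φ (fun i => q (f i)) = ψ (fun i => q (f i))} :=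
    isClosed_eq (hφ.comp hc) (hψ.comp hc)
  exact closure_minimal (by rintro _ ⟨x, rfl⟩; exact h x) hA hp

theorem rc_key_le (hp : p ∈ closure (Set.range (rcEv X)))
    {k : ℕ} (f : Fin k → C(X, ℝ)) {φ ψ : (Fin k → ℝ) → ℝ}
    (hφ : Continuous φ) (hψ : Continuous ψ)
    (h : ∀ x, φ (fun i => f i x) ≤ ψ (fun i => f i x)) :
    φ (fun i => p (f i)) ≤ ψ (fun i => p (f i)) := by
  have hc : Continuous fun q : C(X, ℝ) → ℝ => (fun i => q (f i)) :=
    continuous_pi fun i => continuous_apply (f i)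
  have hA : IsClosed {q : C(X, ℝ) → ℝ |
      φ (fun i => q (f i)) ≤ ψ (fun i => q (f i))} :=
    isClosed_le (hφ.comp hc) (hψ.comp hc)
  exact closure_minimal (by rintro _ ⟨x, rfl⟩; exact h x) hA hp

theorem rc_p_zero (hp : p ∈ closure (Set.range (rcEv X))) : p 0 = 0 := by
  have := rc_key_eq hp (k := 1) (fun _ => (0 : C(X, ℝ)))
    (φ := fun v => v 0) (ψ := fun _ => 0) (continuous_apply 0) continuous_const
    (fun x => by simp)
  simpa using this

theorem rc_p_sub_const (hp : p ∈ closure (Set.range (rcEv X)))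
    (f : C(X, ℝ)) (c : ℝ) : p (f - ContinuousMap.const X c) = p f - c := by
  have := rc_key_eq hp (k := 2) ![f - ContinuousMap.const X c, f]
    (φ := fun v => v 0) (ψ := fun v => v 1 - c)
    (continuous_apply 0) ((continuous_apply 1).sub continuous_const)
    (fun x => by simp)
  simpa using this

/-- If `p f = 0` then `f` has a zero. -/
theorem rc_nonvac (hp : p ∈ closure (Set.range (rcEv X)))
    (f : C(X, ℝ)) (hf : p f = 0) : ∃ x, f x = 0 := by
  by_contra hcon
  push_neg at hcon
  let g : C(X, ℝ) := ⟨fun x => (f x)⁻¹, f.continuous.inv₀ hcon⟩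
  have := rc_key_eq hp (k := 2) ![f, g]
    (φ := fun v => v 0 * v 1) (ψ := fun _ => 1)
    ((continuous_apply 0).mul (continuous_apply 1)) continuous_const
    (fun x => by
      simp only [Matrix.cons_val_zero, Matrix.cons_val_one, Matrix.head_cons]
      exact mul_inv_cancel₀ (hcon x))
  simp only [Matrix.cons_val_zero, Matrix.cons_val_one, Matrix.head_cons, hf,
    zero_mul] at this
  exact zero_ne_one this

/-- Countably many functions annihilated by `p` can be combined into a single one
whose zero set is the intersection of their zero sets. -/
theorem rc_combine (hp : p ∈ closure (Set.range (rcEv X)))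
    (f : ℕ → C(X, ℝ)) (hf : ∀ k, p (f k) = 0) :
    ∃ F : C(X, ℝ), p F = 0 ∧ ∀ x, (F x = 0 ↔ ∀ k, f k x = 0) := by
  classical
  set t : ℕ → X → ℝ := fun k x => (1 / 2 : ℝ) ^ k * min |f k x| 1 with ht
  have ht0 : ∀ k x, 0 ≤ t k x := fun k x =>
    mul_nonneg (by positivity) (le_min (abs_nonneg _) zero_le_one)
  have htle : ∀ k x, t k x ≤ (1 / 2 : ℝ) ^ k := by
    intro k x
    calc t k x ≤ (1 / 2 : ℝ) ^ k * 1 :=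
          mul_le_mul_of_nonneg_left (min_le_right _ _) (by positivity)
      _ = (1 / 2 : ℝ) ^ k := mul_one _
  have hsum : ∀ x, Summable fun k => t k x := fun x =>
    Summable.of_nonneg_of_le (fun k => ht0 k x) (fun k => htle k x)
      summable_geometric_two
  have hcont : Continuous fun x => ∑' k, t k x := by
    refine continuous_tsum (fun k => ?_) summable_geometric_two (fun k x => ?_)
    · exact continuous_const.mul (((f k).continuous.abs).min continuous_const)
    · rw [Real.norm_eq_abs, abs_of_nonneg (ht0 k x)]
      exact htle k x
  set F : C(X, ℝ) := ⟨fun x => ∑' k, t k x, hcont⟩ with hF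
  have hFz : ∀ x, (F x = 0 ↔ ∀ k, f k x = 0) := by
    intro x
    constructor
    · intro h0 k
      have h1 : t k x ≤ 0 := (Summable.le_tsum (hsum x) k fun j _ => ht0 j x).trans_eq h0
      have h2 : t k x = 0 := le_antisymm h1 (ht0 k x)
      have h3 : min |f k x| 1 = 0 := by
        rcases mul_eq_zero.1 h2 with h | h
        · exact absurd h (by positivity)
        · exact h
      rcases min_eq_iff.1 h3 with ⟨h4, _⟩ | ⟨h4, _⟩
      · exact abs_eq_zero.1 h4
      · exact absurd h4 one_ne_zero
    · intro h0
      have : ∀ k, t k x = 0 := fun k => by simp [ht, h0 k]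
      simp only [hF, ContinuousMap.coe_mk]
      rw [tsum_congr this, tsum_zero]
  refine ⟨F, ?_, hFz⟩
  have h0le : 0 ≤ p F := by
    have := rc_key_le hp (k := 1) (fun _ => F)
      (φ := fun _ => 0) (ψ := fun v => v 0) continuous_const (continuous_apply 0)
      (fun x => tsum_nonneg fun k => ht0 k x)
    simpa using this
  have hub : ∀ N : ℕ, p F ≤ 2 * (1 / 2 : ℝ) ^ N := by
    intro N
    have key := rc_key_le hp (k := N + 1) (Fin.snoc (fun i => f i) F)
      (φ := fun v => v (Fin.last N))
      (ψ := fun v => (∑ i : Fin N, (1 / 2 : ℝ) ^ (i : ℕ) * min |v i.castSucc| 1)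
        + 2 * (1 / 2 : ℝ) ^ N)
      (continuous_apply _)
      ((continuous_finset_sum Finset.univ fun (i : Fin N) _ =>
        continuous_const.mul (((continuous_apply i.castSucc).abs).min continuous_const)).add
        continuous_const)
      (fun x => ?_)
    · simp only [Fin.snoc_last, Fin.snoc_castSucc] at key
      have hz0 : (∑ i : Fin N, (1 / 2 : ℝ) ^ (i : ℕ) * min |p (f i)| 1) = 0 :=
        Finset.sum_eq_zero fun i _ => by rw [hf]; simp
      rw [hz0, zero_add] at key
      exact key
    · simp only [Fin.snoc_last, Fin.snoc_castSucc]
      have hsplit : (∑ i ∈ Finset.range N, t i x) + ∑' i, t (i + N) x = ∑' i, t i x :=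
        Summable.sum_add_tsum_nat_add N (hsum x)
      have htail : ∑' i, t (i + N) x ≤ 2 * (1 / 2 : ℝ) ^ N := by
        have h1 : ∑' i, t (i + N) x ≤ ∑' i : ℕ, (1 / 2 : ℝ) ^ (i + N) := by
          refine Summable.tsum_le_tsum (fun i => htle _ x) ?_ ?_
          · exact (summable_nat_add_iff N).2 (hsum x)
          · exact (summable_nat_add_iff N).2 summable_geometric_two
        have h2 : ∑' i : ℕ, (1 / 2 : ℝ) ^ (i + N) = 2 * (1 / 2 : ℝ) ^ N := by
          simp_rw [pow_add]
          rw [tsum_mul_right, tsum_geometric_two]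
        exact h1.trans_eq h2
      have hFx : F x = ∑' i, t i x := rfl
      have hfin : (∑ i : Fin N, (1 / 2 : ℝ) ^ (i : ℕ) * min |f i x| 1)
          = ∑ i ∈ Finset.range N, t i x := Fin.sum_univ_eq_sum_range (fun i => t i x) N
      rw [hFx, hfin]
      linarith
  have hle0 : p F ≤ 0 := by
    have hten : Tendsto (fun N : ℕ => 2 * (1 / 2 : ℝ) ^ N) atTop (𝓝 0) := by
      have := tendsto_pow_atTop_nhds_zero_of_lt_one
        (by norm_num : (0:ℝ) ≤ 1 / 2) (by norm_num : (1/2:ℝ) < 1)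
      simpa using this.const_mul (2 : ℝ)
    exact ge_of_tendsto' hten hub
  exact le_antisymm hle0 h0le

theorem rc_combineC (hp : p ∈ closure (Set.range (rcEv X)))
    {ι : Type*} [Countable ι] (f : ι → C(X, ℝ)) (hf : ∀ i, p (f i) = 0) :
    ∃ F : C(X, ℝ), p F = 0 ∧ ∀ x, (F x = 0 ↔ ∀ i, f i x = 0) := by
  rcases isEmpty_or_nonempty ι with h | h
  · exact ⟨0, rc_p_zero hp, fun x => by simp⟩
  · obtain ⟨σ, hσ⟩ := exists_surjective_nat ι
    obtain ⟨F, h1, h2⟩ := rc_combine hp (f ∘ σ) (fun k => hf _)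
    refine ⟨F, h1, fun x => (h2 x).trans ⟨fun h i => ?_, fun h k => h _⟩⟩
    obtain ⟨k, rfl⟩ := hσ i
    exact h k

theorem rc_ev_isEmbedding [T1Space X] [CompletelyRegularSpace X] :
    IsEmbedding (rcEv X) := by
  have hcont : Continuous (rcEv X) := continuous_pi fun f => f.continuous
  constructor
  · rw [isInducing_iff_nhds]
    intro x
    refine le_antisymm ((hcont.tendsto x).le_comap) ?_
    intro s hs
    obtain ⟨U, hUs, hUo, hxU⟩ := mem_nhds_iff.1 hs
    obtain ⟨f, hfc, hfx, hfK⟩ := CompletelyRegularSpace.completely_regular x Uᶜ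
      hUo.isClosed_compl (by simpa using hxU)
    set g : C(X, ℝ) := ⟨fun y => (f y : ℝ), continuous_subtype_val.comp hfc⟩ with hg
    refine Filter.mem_of_superset ?_ hUs
    rw [Filter.mem_comap]
    refine ⟨(fun q : C(X, ℝ) → ℝ => q g) ⁻¹' Set.Iio (1 / 2), ?_, ?_⟩
    · refine IsOpen.mem_nhds ((continuous_apply g).isOpen_preimage _ isOpen_Iio) ?_
      have : rcEv X x g = (0 : ℝ) := by
        simp only [rcEv, hg, ContinuousMap.coe_mk]
        rw [hfx]; rfl
      simp only [Set.mem_preimage, this, Set.mem_Iio]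
      norm_num
    · intro y hy
      by_contra hyU
      have : g y = 1 := by
        simp only [hg, ContinuousMap.coe_mk]
        rw [hfK (by simpa using hyU)]; rfl
      simp only [Set.mem_preimage, Set.mem_Iio, rcEv, this] at hy
      norm_num at hy
  · intro x y hxy
    by_contra hne
    obtain ⟨f, hfc, hfx, hfy⟩ := CompletelyRegularSpace.completely_regular x {y}
      isClosed_singleton (by simpa using hne)
    set g : C(X, ℝ) := ⟨fun z => (f z : ℝ), continuous_subtype_val.comp hfc⟩
    have h1 : rcEv X x g = rcEv X y g := congrFun hxy g
    have h2 : (f x : ℝ) = 0 := by rw [hfx]; rfl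
    have h3 : (f y : ℝ) = 1 := by rw [hfy rfl]; rfl
    simp only [rcEv, ContinuousMap.coe_mk, g] at h1
    rw [h2, h3] at h1
    exact zero_ne_one h1

end RCAux

/-- Let `X` be a Tychonoff space which is a countable union of subspaces `Xₙ`, each
realcompact and z-embedded in `X` (every zero-set of `Xₙ` is the trace on `Xₙ` of a
zero-set of `X`).  Then `X` is realcompact. -/
theorem stmt11 {X : Type u} [TopologicalSpace X] [T1Space X] [CompletelyRegularSpace X]
    (S : ℕ → Set X) (hcover : ⋃ n, S n = Set.univ)
    (hrc : ∀ n, IsECompact ℝ ↥(S n))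
    (hz : ∀ n, ∀ Z : Set ↥(S n), IsZeroSet Z →
      ∃ Z' : Set X, IsZeroSet Z' ∧ Z = Subtype.val ⁻¹' Z') :
    IsECompact ℝ X := by
  classical
  refine ⟨C(X, ℝ), ⟨0⟩, rcEv X, rc_ev_isEmbedding, isClosed_of_closure_subset ?_⟩
  intro p hp
  -- Step 1: find `n` such that every `f` with `p f = 0` has a zero on `S n`.
  have hn : ∃ n, ∀ f : C(X, ℝ), p f = 0 → ∃ x ∈ S n, f x = 0 := by
    by_contra hcon
    push_neg at hcon
    choose f hf0 hfne using hcon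
    obtain ⟨F, hF0, hFz⟩ := rc_combine hp f hf0
    obtain ⟨x, hx⟩ := rc_nonvac hp F hF0
    have hxu : x ∈ ⋃ n, S n := hcover ▸ Set.mem_univ x
    obtain ⟨n, hxn⟩ := Set.mem_iUnion.1 hxu
    exact hfne n x hxn ((hFz x).1 hx n)
  obtain ⟨n, hn⟩ := hn
  obtain ⟨J, hJne, j, hjemb, hjcl⟩ := hrc n
  -- Dichotomy for zero sets of `S n`, via z-embedding.
  have dich : ∀ W : Set ↥(S n), IsZeroSet W →
      (∃ f : C(X, ℝ), p f = 0 ∧ ∀ y : ↥(S n), (f ↑y = 0 ↔ y ∈ W)) ∨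
      (∃ f : C(X, ℝ), p f = 0 ∧ ∀ y : ↥(S n), y ∈ W → f ↑y ≠ 0) := by
    intro W hW
    obtain ⟨Z', ⟨h, hhc, rfl⟩, hWZ⟩ := hz n W hW
    set hC : C(X, ℝ) := ⟨h, hhc⟩ with hhC
    by_cases hr : p hC = 0
    · left
      refine ⟨hC, hr, fun y => ?_⟩
      rw [hWZ]
      simp [hhC]
    · right
      refine ⟨hC - ContinuousMap.const X (p hC), by rw [rc_p_sub_const hp]; ring, ?_⟩
      intro y hy hzero
      rw [hWZ] at hy
      simp only [Set.mem_preimage, Set.mem_singleton_iff] at hy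
      have h1 : hC ↑y = h ↑y := rfl
      have h2 : (hC - ContinuousMap.const X (p hC)) ↑y = hC ↑y - p hC :=
        ContinuousMap.sub_apply _ _ _
      rw [h2, h1, hy] at hzero
      exact hr (by linarith)
  -- For every continuous function on `S n`, a limit value along the trace filter.
  have hlim : ∀ g : ↥(S n) → ℝ, Continuous g → ∃ r : ℝ, ∀ ε > 0,
      ∃ f : C(X, ℝ), p f = 0 ∧ ∀ y : ↥(S n), f ↑y = 0 → |g y - r| ≤ ε := by
    intro g hg
    set D : Set ℝ := {t | ∃ f : C(X, ℝ), p f = 0 ∧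
      ∀ y : ↥(S n), f ↑y = 0 → g y ≤ t} with hD
    have hzle : ∀ t : ℝ, IsZeroSet {y : ↥(S n) | g y ≤ t} := by
      intro t
      refine ⟨fun y => max (g y - t) 0, (hg.sub continuous_const).max continuous_const, ?_⟩
      ext y
      simp [max_eq_right_iff, sub_nonpos]
    have hzge : ∀ t : ℝ, IsZeroSet {y : ↥(S n) | t ≤ g y} := by
      intro t
      refine ⟨fun y => max (t - g y) 0, (continuous_const.sub hg).max continuous_const, ?_⟩
      ext y
      simp [max_eq_right_iff, sub_nonpos]
    have hDne : D.Nonempty := by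
      by_contra hDe
      rw [Set.not_nonempty_iff_eq_empty] at hDe
      have hstep : ∀ k : ℕ, ∃ f : C(X, ℝ), p f = 0 ∧
          ∀ y : ↥(S n), f ↑y = 0 → (k : ℝ) < g y := by
        intro k
        rcases dich {y | g y ≤ (k : ℝ)} (hzle _) with ⟨f, hf0, hiff⟩ | ⟨f, hf0, hne⟩
        · exfalso
          have : (k : ℝ) ∈ D := ⟨f, hf0, fun y hy => (hiff y).1 hy⟩
          rw [hDe] at this
          exact this
        · exact ⟨f, hf0, fun y hy => lt_of_not_ge fun hle => hne y hle hy⟩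
      choose f hf0 hfg using hstep
      obtain ⟨F, hF0, hFz⟩ := rc_combineC hp f hf0
      obtain ⟨x, hxS, hxF⟩ := hn F hF0
      obtain ⟨k, hk⟩ := exists_nat_gt (g ⟨x, hxS⟩)
      exact absurd (hfg k ⟨x, hxS⟩ ((hFz x).1 hxF k)) (by linarith)
    have hDbdd : BddBelow D := by
      by_contra hbd
      have hstep : ∀ k : ℕ, ∃ f : C(X, ℝ), p f = 0 ∧
          ∀ y : ↥(S n), f ↑y = 0 → g y ≤ -(k : ℝ) := by
        intro k
        obtain ⟨t, htD, htlt⟩ := not_bddBelow_iff.1 hbd (-(k : ℝ))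
        obtain ⟨f, hf0, hfle⟩ := htD
        exact ⟨f, hf0, fun y hy => (hfle y hy).trans htlt.le⟩
      choose f hf0 hfg using hstep
      obtain ⟨F, hF0, hFz⟩ := rc_combineC hp f hf0
      obtain ⟨x, hxS, hxF⟩ := hn F hF0
      obtain ⟨k, hk⟩ := exists_nat_gt (-(g ⟨x, hxS⟩))
      have := hfg k ⟨x, hxS⟩ ((hFz x).1 hxF k)
      linarith
    refine ⟨sInf D, fun ε hε => ?_⟩
    obtain ⟨t, htD, htlt⟩ := exists_lt_of_csInf_lt hDne
      (by linarith : sInf D < sInf D + ε)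
    obtain ⟨fa, hfa0, hfa⟩ := htD
    have hb : ∃ fb : C(X, ℝ), p fb = 0 ∧
        ∀ y : ↥(S n), fb ↑y = 0 → sInf D - ε ≤ g y := by
      rcases dich {y | sInf D - ε ≤ g y} (hzge _) with ⟨fb, hf0, hiff⟩ | ⟨fb, hf0, hne⟩
      · exact ⟨fb, hf0, fun y hy => (hiff y).1 hy⟩
      · exfalso
        have hmem : (sInf D - ε) ∈ D := by
          refine ⟨fb, hf0, fun y hy => ?_⟩
          by_contra hgt
          exact hne y (by push_neg at hgt; exact le_of_lt hgt) hy
        have := csInf_le hDbdd hmem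
        linarith
    obtain ⟨fb, hfb0, hfb⟩ := hb
    obtain ⟨F, hF0, hFz⟩ := rc_combineC hp (fun b : Bool => bif b then fa else fb)
      (fun b => by cases b <;> simpa)
    refine ⟨F, hF0, fun y hy => ?_⟩
    have hall := (hFz ↑y).1 hy
    have h1 := hfa y (by simpa using hall true)
    have h2 := hfb y (by simpa using hall false)
    rw [abs_le]
    constructor <;> linarith
  -- Define the candidate limit point in `ℝ^J` and show it lies in `range j`.
  have hgc : ∀ i : J, Continuous fun y : ↥(S n) => j y i := fun i =>
    (continuous_apply i).comp hjemb.continuous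
  choose q hq using fun i : J => hlim _ (hgc i)
  -- For each finite collection of coordinates and neighborhoods, a member of the
  -- trace filter forcing `j y` into those neighborhoods.
  have hforce : ∀ (I : Finset J) (V : J → Set ℝ), (∀ i, V i ∈ nhds (q i)) →
      ∃ f : C(X, ℝ), p f = 0 ∧ ∀ y : ↥(S n), f ↑y = 0 → ∀ i ∈ I, j y i ∈ V i := by
    intro I V hV
    have hstep : ∀ i : {i : J // i ∈ I}, ∃ f : C(X, ℝ), p f = 0 ∧
        ∀ y : ↥(S n), f ↑y = 0 → j y ↑i ∈ V ↑i := by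
      intro i
      obtain ⟨ε, hε, hball⟩ := Metric.mem_nhds_iff.1 (hV ↑i)
      obtain ⟨f, hf0, hf⟩ := hq ↑i (ε / 2) (by linarith)
      refine ⟨f, hf0, fun y hy => hball ?_⟩
      rw [Metric.mem_ball, Real.dist_eq]
      have := hf y hy
      linarith [abs_nonneg (j y ↑i - q ↑i)]
    choose f hf0 hf using hstep
    obtain ⟨F, hF0, hFz⟩ := rc_combineC hp f hf0
    exact ⟨F, hF0, fun y hy i hi => hf ⟨i, hi⟩ y ((hFz ↑y).1 hy ⟨i, hi⟩)⟩
  have hqcl : q ∈ closure (Set.range j) := by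
    rw [mem_closure_iff_nhds]
    intro s hs
    rw [nhds_pi, Filter.mem_pi'] at hs
    obtain ⟨I, V, hV, hVs⟩ := hs
    obtain ⟨F, hF0, hF⟩ := hforce I V hV
    obtain ⟨x, hxS, hxF⟩ := hn F hF0
    refine ⟨j ⟨x, hxS⟩, ?_, Set.mem_range_self _⟩
    exact hVs fun i hi => hF ⟨x, hxS⟩ hxF i hi
  obtain ⟨y₀, hy₀⟩ := hjcl.closure_subset hqcl
  -- `y₀` belongs to the trace of every `p`-zero set.
  have hmem : ∀ f : C(X, ℝ), p f = 0 → f ↑y₀ = 0 := by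
    intro f₁ hf₁
    have hZcl : IsClosed {y : ↥(S n) | f₁ ↑y = 0} :=
      isClosed_eq (f₁.continuous.comp continuous_subtype_val) continuous_const
    have hy₀Z : y₀ ∈ closure {y : ↥(S n) | f₁ ↑y = 0} := by
      rw [mem_closure_iff_nhds]
      intro s hs
      rw [hjemb.isInducing.nhds_eq_comap, Filter.mem_comap] at hs
      obtain ⟨u, hu, hus⟩ := hs
      rw [hy₀, nhds_pi, Filter.mem_pi'] at hu
      obtain ⟨I, V, hV, hVu⟩ := hu
      obtain ⟨F, hF0, hF⟩ := hforce I V hV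
      obtain ⟨G, hG0, hGz⟩ := rc_combineC hp (fun b : Bool => bif b then F else f₁)
        (fun b => by cases b <;> simpa)
      obtain ⟨x, hxS, hxG⟩ := hn G hG0
      have hall := (hGz x).1 hxG
      have hxF : F x = 0 := by simpa using hall true
      have hxf₁ : f₁ x = 0 := by simpa using hall false
      refine ⟨⟨x, hxS⟩, ?_, hxf₁⟩
      exact hus (hVu fun i hi => hF ⟨x, hxS⟩ hxF i hi)
    rwa [hZcl.closure_eq] at hy₀Z
  -- Conclude `p = rcEv X ↑y₀`.
  refine ⟨(↑y₀ : X), ?_⟩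
  funext f₁
  have h0 : p (f₁ - ContinuousMap.const X (p f₁)) = 0 := by
    rw [rc_p_sub_const hp]; ring
  have := hmem _ h0
  simp only [ContinuousMap.sub_apply, ContinuousMap.const_apply, sub_eq_zero] at this
  exact this
end

section
/- (i) Let X be a realcompact space and let S ⊆ X be a Baire set of X, i.e. a member of the σ-algebra on X generated by the zero-sets of X. Then the subspace S of X is realcompact. (ii) Let X be an ℕ-compact space and let S ⊆ X be a zero-Baire set of X, i.e. a member of the σ-algebra on X generated by the clopen subsets of X. Then the subspace S of X is ℕ-compact. -/
open Topology TopologicalSpace Set MeasureTheory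

universe u

/-!
The sets `g ⁻¹' B` with `g : X → E^ℕ` continuous form a σ-algebra (countably many such `g` pack
into one through `ℕ ≃ ℕ × ℕ`), which contains the zero-sets for `E = ℝ` and the clopen sets for
`E = ℕ`. So a Baire set is `g ⁻¹' B` for some `B ⊆ ℝ^ℕ`, and a zero-Baire set for some `B ⊆ ℕ^ℕ`.
The subspace `B` is Lindelöf, and Lindelöf subspaces of powers of `ℝ` (resp. `ℕ`) are realcompact
(resp. `ℕ`-compact): let `p` lie in the closure of the image of the evaluation map
`B → ℝ^C(B, ℝ)`. If `p` were not an evaluation, the Lindelöf property would produce countably many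
`f n` such that no point `y` has `f n y = p (f n)` for all `n`. But then the reciprocal of the
distance from `(f n y)ₙ` to `(p (f n))ₙ` is a continuous function on which `p` cannot take a
finite value; for `ℕ` the index of the first disagreement plays the same role. Finally `g ⁻¹' B`
is the closed subset `{(x, b) | g x = b}` of `X × B`.
-/

universe v

namespace IsECompact

variable {E : Type*} [TopologicalSpace E]

theorem of_isClosedEmbedding {X Y : Type u} [TopologicalSpace X] [TopologicalSpace Y]
    (hY : IsECompact E Y) {f : X → Y} (hf : IsClosedEmbedding f) : IsECompact E X := by
  obtain ⟨J, hJ, e, he, he_closed⟩ := hY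
  have hef : IsClosedEmbedding (e ∘ f) := IsClosedEmbedding.comp ⟨he, he_closed⟩ hf
  exact ⟨J, hJ, e ∘ f, hef.isEmbedding, hef.isClosed_range⟩

-- `Y` may live in a smaller universe than `X`, as a subspace of `ℕ → ℝ` does.
theorem prod {X : Type (max u v)} {Y : Type v} [TopologicalSpace X] [TopologicalSpace Y]
    (hX : IsECompact E X) (hY : IsECompact E Y) : IsECompact E (X × Y) := by
  obtain ⟨J, ⟨j⟩, e, he, he_closed⟩ := hX
  obtain ⟨K, -, e', he', he'_closed⟩ := hY
  let L : (J → E) × (K → E) ≃ₜ (J ⊕ ULift.{u} K → E) :=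
    ((Homeomorph.refl _).prodCongr (.piCongrLeft Equiv.ulift.symm)).trans
      Homeomorph.sumArrowHomeomorphProdArrow.symm
  have hprod : IsClosedEmbedding (L ∘ Prod.map e e') :=
    L.isClosedEmbedding.comp (.prodMap ⟨he, he_closed⟩ ⟨he', he'_closed⟩)
  exact ⟨J ⊕ ULift.{u} K, ⟨.inl j⟩, _, hprod.isEmbedding, hprod.isClosed_range⟩

theorem preimage {X : Type (max u v)} {Y : Type v} [TopologicalSpace X] [TopologicalSpace Y]
    [T2Space Y] (hX : IsECompact E X) {g : X → Y} (hg : Continuous g) {B : Set Y}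
    (hB : IsECompact E B) : IsECompact E (g ⁻¹' B) := by
  let m : g ⁻¹' B → X × B := fun x => (x, ⟨g x, x.2⟩)
  have hm_range : range m = {z : X × B | g z.1 = z.2} := by
    ext z
    constructor
    · rintro ⟨x, rfl⟩
      rfl
    · intro h
      exact ⟨⟨z.1, mem_preimage.2 (h ▸ z.2.2)⟩, Prod.ext rfl (Subtype.ext h)⟩
  have hm : IsClosedEmbedding m :=
    ⟨.of_comp (by fun_prop) continuous_fst .subtypeVal,
      hm_range ▸ isClosed_eq (by fun_prop) (by fun_prop)⟩
  exact (hX.prod hB).of_isClosedEmbedding hm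

end IsECompact

section evalMap

variable (Y E : Type*) [TopologicalSpace Y] [TopologicalSpace E]

def evalMap : Y → C(Y, E) → E := fun y f => f y

variable {Y E}

theorem continuous_evalMap : Continuous (evalMap Y E) :=
  continuous_pi fun f => f.continuous

theorem isEmbedding_evalMap {ι : Type*} {e : Y → ι → E} (he : IsEmbedding e) :
    IsEmbedding (evalMap Y E) := by
  let r : (C(Y, E) → E) → ι → E := fun q i =>
    q ⟨fun y => e y i, (continuous_apply i).comp he.continuous⟩
  exact .of_comp continuous_evalMap (g := r) (by fun_prop) he

theorem mk_mem_closure_range_of_mem_closure_range_evalMap {p : C(Y, E) → E}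
    (hp : p ∈ closure (range (evalMap Y E))) (G : C(Y, E)) (f : ℕ → C(Y, E)) :
    (p G, fun n => p (f n)) ∈ closure (range fun y => (G y, fun n => f n y)) :=
  map_mem_closure (f := fun q => (q G, fun n => q (f n))) (by fun_prop) hp
    (by rintro _ ⟨y, rfl⟩; exact ⟨y, rfl⟩)

theorem mem_range_evalMap_of_forall_nat [LindelofSpace Y] [T1Space E] {p : C(Y, E) → E}
    (hp : p ∈ closure (range (evalMap Y E)))
    (h : ∀ f : ℕ → C(Y, E), ∃ y, ∀ n, f n y = p (f n)) : p ∈ range (evalMap Y E) := by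
  by_contra hp_range
  have hcover : ∀ y, ∃ f : C(Y, E), f y ≠ p f := fun y => by
    by_contra! hy
    exact hp_range ⟨y, funext hy⟩
  obtain ⟨t, ht, ht_cover⟩ := isLindelof_univ.elim_countable_subcover (fun f => {y | f y ≠ p f})
    (fun f => isOpen_compl_singleton.preimage f.continuous)
    fun y _ => mem_iUnion.2 (hcover y)
  obtain ⟨-, y₀, -⟩ := closure_nonempty_iff.1 ⟨p, hp⟩
  have : Nonempty C(Y, E) := ⟨(hcover y₀).choose⟩
  obtain ⟨f, hf⟩ := countable_iff_exists_subset_range.1 ht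
  obtain ⟨y, hy⟩ := h f
  obtain ⟨g, hg, hgy⟩ := mem_iUnion₂.1 (ht_cover (mem_univ y))
  obtain ⟨n, rfl⟩ := hf hg
  exact hgy (hy n)

theorem exists_forall_eq_of_mem_closure_range_evalMap_real {p : C(Y, ℝ) → ℝ}
    (hp : p ∈ closure (range (evalMap Y ℝ))) (f : ℕ → C(Y, ℝ)) :
    ∃ y, ∀ n, f n y = p (f n) := by
  let q : ℕ → ℝ := fun n => p (f n)
  let h : Y → ℕ → ℝ := fun y n => f n y
  by_contra! hne
  have hne' : ∀ y, h y ≠ q := fun y hy => (hne y).elim fun n hn => hn (congrFun hy n)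
  let _ : MetricSpace (ℕ → ℝ) := metrizableSpaceMetric _
  let G : C(Y, ℝ) := ⟨fun y => (dist (h y) q)⁻¹,
    ((continuous_pi fun n => (f n).continuous).dist continuous_const).inv₀
      fun y => dist_ne_zero.2 (hne' y)⟩
  set M := p G
  have hr : 0 < (|M| + 1)⁻¹ := by positivity
  obtain ⟨_, ⟨hGy, hhy⟩, y, rfl⟩ := mem_closure_iff.1
    (mk_mem_closure_range_of_mem_closure_range_evalMap hp G f)
    (Metric.ball M 1 ×ˢ Metric.ball q (|M| + 1)⁻¹) (Metric.isOpen_ball.prod Metric.isOpen_ball)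
    ⟨Metric.mem_ball_self one_pos, Metric.mem_ball_self hr⟩
  have hGy_gt : |M| + 1 < G y := lt_inv_comm₀ (by positivity) (dist_pos.2 (hne' y)) |>.2 hhy
  have hGy_lt : G y < M + 1 := by
    have := abs_lt.1 (Real.dist_eq _ _ ▸ Metric.mem_ball.1 hGy)
    linarith
  linarith [le_abs_self M]

theorem exists_forall_eq_of_mem_closure_range_evalMap_nat {p : C(Y, ℕ) → ℕ}
    (hp : p ∈ closure (range (evalMap Y ℕ))) (f : ℕ → C(Y, ℕ)) :
    ∃ y, ∀ n, f n y = p (f n) := by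
  by_contra! hne
  let F : Y → ℕ := fun y => Nat.find (hne y)
  have hF : Continuous F := continuous_discrete_rng.2 fun n => by
    have : F ⁻¹' {n} = f n ⁻¹' {p (f n)}ᶜ ∩ ⋂ m ∈ Finset.range n, f m ⁻¹' {p (f m)} := by
      ext y
      simp [F, Nat.find_eq_iff]
    rw [this]
    exact (isOpen_discrete _).preimage (f n).continuous |>.inter <|
      isOpen_biInter_finset fun m _ => (isOpen_discrete _).preimage (f m).continuous
  set m := p ⟨F, hF⟩
  obtain ⟨_, ⟨hFy, hfy⟩, y, rfl⟩ := mem_closure_iff.1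
    (mk_mem_closure_range_of_mem_closure_range_evalMap hp ⟨F, hF⟩ f)
    ({m} ×ˢ ((fun x : ℕ → ℕ => x m) ⁻¹' {p (f m)})) ((isOpen_discrete _).prod
      ((isOpen_discrete _).preimage (continuous_apply m)))
    ⟨rfl, rfl⟩
  have hFy : Nat.find (hne y) = m := hFy
  exact (hFy ▸ Nat.find_spec (hne y)) hfy

end evalMap

namespace IsECompact

variable {Y : Type u} [TopologicalSpace Y] [LindelofSpace Y]

theorem of_lindelofSpace {E : Type} [TopologicalSpace E] [T1Space E] [Nonempty E]
    {ι : Type*} {e : Y → ι → E} (he : IsEmbedding e)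
    (h : ∀ p ∈ closure (range (evalMap Y E)), ∀ f : ℕ → C(Y, E), ∃ y, ∀ n, f n y = p (f n)) :
    IsECompact E Y :=
  ⟨C(Y, E), ⟨.const Y (Classical.arbitrary E)⟩, evalMap Y E, isEmbedding_evalMap he,
    isClosed_of_closure_subset fun p hp => mem_range_evalMap_of_forall_nat hp (h p hp)⟩

theorem real_of_lindelofSpace {ι : Type*} {e : Y → ι → ℝ} (he : IsEmbedding e) :
    IsECompact ℝ Y :=
  of_lindelofSpace he fun _ hp => exists_forall_eq_of_mem_closure_range_evalMap_real hp

theorem nat_of_lindelofSpace {ι : Type*} {e : Y → ι → ℕ} (he : IsEmbedding e) :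
    IsECompact ℕ Y :=
  of_lindelofSpace he fun _ hp => exists_forall_eq_of_mem_closure_range_evalMap_nat hp

end IsECompact

theorem MeasurableSet.exists_continuous_preimage_eq_of_generateFrom {X E : Type*}
    [TopologicalSpace X] [TopologicalSpace E] [Nonempty E] {G : Set (Set X)}
    (hG : ∀ Z ∈ G, ∃ χ : X → E, Continuous χ ∧ ∃ T, χ ⁻¹' T = Z) {S : Set X}
    (hS : MeasurableSet[MeasurableSpace.generateFrom G] S) :
    ∃ g : X → ℕ → E, Continuous g ∧ ∃ B, g ⁻¹' B = S := by
  induction S, hS using MeasurableSpace.generateFrom_induction with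
  | hC Z hZ _ =>
    obtain ⟨χ, hχ, T, rfl⟩ := hG Z hZ
    exact ⟨fun x _ => χ x, by fun_prop, {x | x 0 ∈ T}, rfl⟩
  | empty => exact ⟨fun _ _ => Classical.arbitrary E, continuous_const, ∅, rfl⟩
  | compl S _ ih =>
    obtain ⟨g, hg, B, rfl⟩ := ih
    exact ⟨g, hg, Bᶜ, rfl⟩
  | iUnion S _ ih =>
    choose g hg B hB using ih
    let π : ℕ ≃ ℕ × ℕ := (Denumerable.eqv (ℕ × ℕ)).symm
    refine ⟨fun x k => g (π k).1 x (π k).2, by fun_prop,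
      {x | ∃ n, (fun m => x (π.symm (n, m))) ∈ B n}, ?_⟩
    simp [← hB, Set.preimage, Set.ext_iff]

theorem IsZeroSet.exists_continuous_preimage_eq {X : Type*} [TopologicalSpace X] {Z : Set X}
    (hZ : IsZeroSet Z) : ∃ χ : X → ℝ, Continuous χ ∧ ∃ T, χ ⁻¹' T = Z := by
  obtain ⟨f, hf, rfl⟩ := hZ
  exact ⟨f, hf, {0}, rfl⟩

theorem IsClopen.exists_continuous_nat_preimage_eq {X : Type*} [TopologicalSpace X] {Z : Set X}
    (hZ : IsClopen Z) : ∃ χ : X → ℕ, Continuous χ ∧ ∃ T, χ ⁻¹' T = Z := by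
  refine ⟨Bool.toNat ∘ Z.boolIndicator, continuous_of_discreteTopology.comp
    ((continuous_boolIndicator_iff_isClopen Z).2 hZ), {1}, Set.ext fun x => ?_⟩
  by_cases hx : x ∈ Z <;> simp [Set.boolIndicator, hx]

/-- (i) Every Baire set (member of the σ-algebra generated by the zero-sets) of a
realcompact space is realcompact as a subspace.  (ii) Every zero-Baire set (member
of the σ-algebra generated by the clopen sets) of an `ℕ`-compact space is
`ℕ`-compact as a subspace. -/
theorem stmt15 {X : Type u} [TopologicalSpace X] :
    (IsECompact ℝ X → ∀ S : Set X,
      MeasurableSet[MeasurableSpace.generateFrom {Z : Set X | IsZeroSet Z}] S →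
        IsECompact ℝ ↥S) ∧
    (IsECompact ℕ X → ∀ S : Set X,
      MeasurableSet[MeasurableSpace.generateFrom {Z : Set X | IsClopen Z}] S →
        IsECompact ℕ ↥S) := by
  constructor
  · intro hX S hS
    obtain ⟨g, hg, B, rfl⟩ := hS.exists_continuous_preimage_eq_of_generateFrom
      fun _ hZ => IsZeroSet.exists_continuous_preimage_eq hZ
    exact hX.preimage hg (.real_of_lindelofSpace IsEmbedding.subtypeVal)
  · intro hX S hS
    obtain ⟨g, hg, B, rfl⟩ := hS.exists_continuous_preimage_eq_of_generateFrom
      fun _ hZ => IsClopen.exists_continuous_nat_preimage_eq hZ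
    exact hX.preimage hg (.nat_of_lindelofSpace IsEmbedding.subtypeVal)
end
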